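/- arXiv:1308.3038 — 7 statements merged into one kernel-verified Lean document; each statement's English description precedes it below -/
import Mathlib

section
/- Consider a multigraph configuration consisting of two vertices v_1, v_2 joined by two parallel edges e_1, e_2, with a thick halfedge f_1 attached to v_1 and a thick halfedge f_2 attached to v_2. Suppose L assigns lists of colors with |L(e_1)|, |L(e_2)| ≥ 5, |L(v_1)|, |L(v_2)| ≥ 4, and |L(f_1)|, |L(f_2)| ≥ 3. Then there is a choice of a color c(x) ∈ L(x) for each element x such that: c(v_1) ≠ c(v_2); c(e_1) ≠ c(e_2); c(e_1) and c(e_2) each differ from c(v_1), c(v_2), c(f_1), and c(f_2); c(f_1) ≠ c(v_1); c(f_2) ≠ c(v_2); and c(f_1) ≠ c(f_2). -/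
open Finset

private lemma sdiff_card_ge {s t : Finset ℕ} {n : ℕ} (h : t.card + n ≤ s.card) :
    n ≤ (s \ t).card := by
  have := Finset.le_card_sdiff t s
  omega

private lemma pair_card_le (a b : ℕ) : ({a, b} : Finset ℕ).card ≤ 2 :=
  le_trans (Finset.card_insert_le _ _) (by simp)

private lemma pick_two {Le1 Le2 S : Finset ℕ}
    (h1 : 5 ≤ Le1.card) (h2 : 5 ≤ Le2.card) (hS : S.card ≤ 3) :
    ∃ ce1 ∈ Le1, ∃ ce2 ∈ Le2, ce1 ∉ S ∧ ce2 ∉ S ∧ ce1 ≠ ce2 := by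
  have hne1 : (Le1 \ S).Nonempty :=
    Finset.card_pos.1 (lt_of_lt_of_le Nat.zero_lt_one (sdiff_card_ge (by omega)))
  obtain ⟨ce1, hce1⟩ := hne1
  rw [Finset.mem_sdiff] at hce1
  have hne2 : (Le2 \ insert ce1 S).Nonempty := by
    refine Finset.card_pos.1 (lt_of_lt_of_le Nat.zero_lt_one (sdiff_card_ge ?_))
    have h4 := Finset.card_insert_le ce1 S
    omega
  obtain ⟨ce2, hce2⟩ := hne2
  rw [Finset.mem_sdiff, Finset.mem_insert] at hce2
  push_neg at hce2
  exact ⟨ce1, hce1.1, ce2, hce2.1, hce1.2, hce2.2.2, fun h => hce2.2.1 h.symm⟩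

private lemma stuck_mem {Le1 Le2 S : Finset ℕ}
    (h1 : Le1.card = 5) (h2 : 5 ≤ Le2.card) (hS : S.card ≤ 4)
    (hstuck : ∀ ce1 ∈ Le1, ∀ ce2 ∈ Le2, ce1 ∉ S → ce2 ∉ S → ce1 ≠ ce2 → False) :
    S ⊆ Le1 := by
  have hne : (Le1 \ S).Nonempty :=
    Finset.card_pos.1 (lt_of_lt_of_le Nat.zero_lt_one (sdiff_card_ge (by omega)))
  obtain ⟨u, hu⟩ := hne
  have hu' := Finset.mem_sdiff.1 hu
  have hLe2sub : ∀ w ∈ Le1 \ S, Le2 ⊆ insert w S := by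
    intro w hw ce2 hce2
    rw [Finset.mem_sdiff] at hw
    by_contra hc
    rw [Finset.mem_insert] at hc
    push_neg at hc
    exact hstuck w hw.1 ce2 hce2 hw.2 hc.2 (fun h => hc.1 h.symm)
  have huniq : Le1 \ S ⊆ {u} := by
    intro v hv
    rw [Finset.mem_singleton]
    by_contra hvu
    have hv' := Finset.mem_sdiff.1 hv
    have h2' : Le2 ⊆ S := by
      intro x hx
      have hxu := Finset.mem_insert.1 (hLe2sub u hu hx)
      have hxv := Finset.mem_insert.1 (hLe2sub v hv hx)
      rcases hxu with rfl | h
      · rcases hxv with h' | h'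
        · exact absurd h'.symm hvu
        · exact absurd h' hu'.2
      · exact h
    have := Finset.card_le_card h2'
    omega
  have hsub : Le1 ⊆ insert u S := by
    intro x hx
    by_cases hxS : x ∈ S
    · exact Finset.mem_insert_of_mem hxS
    · exact Finset.mem_insert.2 (Or.inl (Finset.mem_singleton.1
        (huniq (Finset.mem_sdiff.2 ⟨hx, hxS⟩))))
  have hcard : (insert u S).card ≤ 5 := by
    have := Finset.card_insert_le u S
    omega
  have heq : Le1 = insert u S := Finset.eq_of_subset_of_card_le hsub (by omega)
  intro x hx
  rw [heq]
  exact Finset.mem_insert_of_mem hx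

private lemma main' (Lv1 Lv2 Le1 Le2 Lf1 Lf2 : Finset ℕ)
    (hLe1 : Le1.card = 5) (hLe2 : 5 ≤ Le2.card)
    (hLv1 : 4 ≤ Lv1.card) (hLv2 : 4 ≤ Lv2.card)
    (hLf1 : 3 ≤ Lf1.card) (hLf2 : 3 ≤ Lf2.card) :
    ∃ (cv1 cv2 ce1 ce2 cf1 cf2 : ℕ),
      cv1 ∈ Lv1 ∧ cv2 ∈ Lv2 ∧ ce1 ∈ Le1 ∧ ce2 ∈ Le2 ∧ cf1 ∈ Lf1 ∧ cf2 ∈ Lf2 ∧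
      cv1 ≠ cv2 ∧ ce1 ≠ ce2 ∧
      ce1 ≠ cv1 ∧ ce1 ≠ cv2 ∧ ce1 ≠ cf1 ∧ ce1 ≠ cf2 ∧
      ce2 ≠ cv1 ∧ ce2 ≠ cv2 ∧ ce2 ≠ cf1 ∧ ce2 ≠ cf2 ∧
      cf1 ≠ cv1 ∧ cf2 ≠ cv2 ∧ cf1 ≠ cf2 := by
  have hLe1' : 5 ≤ Le1.card := hLe1.ge
  by_cases hA : (Lf1 ∩ Lv2).Nonempty
  · -- choose cf1 = cv2 = c
    obtain ⟨c, hc⟩ := hA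
    rw [Finset.mem_inter] at hc
    obtain ⟨cv1, hcv1⟩ : (Lv1 \ {c}).Nonempty :=
      Finset.card_pos.1 (lt_of_lt_of_le Nat.zero_lt_one (sdiff_card_ge (by simp; omega)))
    rw [Finset.mem_sdiff, Finset.mem_singleton] at hcv1
    obtain ⟨cf2, hcf2⟩ : (Lf2 \ {c}).Nonempty :=
      Finset.card_pos.1 (lt_of_lt_of_le Nat.zero_lt_one (sdiff_card_ge (by simp; omega)))
    rw [Finset.mem_sdiff, Finset.mem_singleton] at hcf2
    obtain ⟨ce1, hce1, ce2, hce2, hn1, hn2, hne⟩ :=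
      pick_two (S := {cv1, c, cf2}) hLe1' hLe2
        (le_trans (Finset.card_insert_le _ _) (by have := pair_card_le c cf2; omega))
    simp only [Finset.mem_insert, Finset.mem_singleton] at hn1 hn2
    push_neg at hn1 hn2
    exact ⟨cv1, c, ce1, ce2, c, cf2, hcv1.1, hc.2, hce1, hce2, hc.1, hcf2.1,
      hcv1.2, hne, hn1.1, hn1.2.1, hn1.2.1, hn1.2.2, hn2.1, hn2.2.1, hn2.2.1, hn2.2.2,
      fun h => hcv1.2 h.symm, hcf2.2, fun h => hcf2.2 h.symm⟩
  by_cases hB : (Lf2 ∩ Lv1).Nonempty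
  · -- choose cf2 = cv1 = c
    obtain ⟨c, hc⟩ := hB
    rw [Finset.mem_inter] at hc
    obtain ⟨cv2, hcv2⟩ : (Lv2 \ {c}).Nonempty :=
      Finset.card_pos.1 (lt_of_lt_of_le Nat.zero_lt_one (sdiff_card_ge (by simp; omega)))
    rw [Finset.mem_sdiff, Finset.mem_singleton] at hcv2
    obtain ⟨cf1, hcf1⟩ : (Lf1 \ {c}).Nonempty :=
      Finset.card_pos.1 (lt_of_lt_of_le Nat.zero_lt_one (sdiff_card_ge (by simp; omega)))
    rw [Finset.mem_sdiff, Finset.mem_singleton] at hcf1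
    obtain ⟨ce1, hce1, ce2, hce2, hn1, hn2, hne⟩ :=
      pick_two (S := {c, cv2, cf1}) hLe1' hLe2
        (le_trans (Finset.card_insert_le _ _) (by have := pair_card_le cv2 cf1; omega))
    simp only [Finset.mem_insert, Finset.mem_singleton] at hn1 hn2
    push_neg at hn1 hn2
    exact ⟨c, cv2, ce1, ce2, cf1, c, hc.2, hcv2.1, hce1, hce2, hcf1.1, hc.1,
      fun h => hcv2.2 h.symm, hne, hn1.1, hn1.2.1, hn1.2.2, hn1.1, hn2.1, hn2.2.1,
      hn2.2.2, hn2.1, hcf1.2, fun h => hcv2.2 h.symm, hcf1.2⟩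
  -- Case C: both intersections empty
  rw [Finset.not_nonempty_iff_eq_empty] at hA hB
  by_contra hcon
  have key : ∀ cf1 ∈ Lf1, ∀ cf2 ∈ Lf2, ∀ cv1 ∈ Lv1, ∀ cv2 ∈ Lv2,
      cf1 ≠ cv1 → cf2 ≠ cf1 → cv2 ≠ cv1 → cv2 ≠ cf2 →
      ({cv1, cv2, cf1, cf2} : Finset ℕ) ⊆ Le1 := by
    intro cf1 hcf1 cf2 hcf2 cv1 hcv1 cv2 hcv2 h1 h2 h3 h4
    apply stuck_mem hLe1 hLe2
    · refine le_trans (Finset.card_insert_le _ _) ?_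
      refine le_trans (Nat.succ_le_succ (Finset.card_insert_le _ _)) ?_
      have := pair_card_le cf1 cf2
      omega
    · intro ce1 hce1 ce2 hce2 hm1 hm2 hne
      simp only [Finset.mem_insert, Finset.mem_singleton] at hm1 hm2
      push_neg at hm1 hm2
      exact hcon ⟨cv1, cv2, ce1, ce2, cf1, cf2, hcv1, hcv2, hce1, hce2, hcf1, hcf2,
        fun h => h3 h.symm, hne, hm1.1, hm1.2.1, hm1.2.2.1, hm1.2.2.2,
        hm2.1, hm2.2.1, hm2.2.2.1, hm2.2.2.2,
        h1, fun h => h4 h.symm, fun h => h2 h.symm⟩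
  obtain ⟨cf1, hcf1⟩ := Finset.card_pos.1 (by omega : 0 < Lf1.card)
  have hLv1c : 3 ≤ (Lv1 \ {cf1}).card := sdiff_card_ge (by simp; omega)
  have hLf2c : 2 ≤ (Lf2 \ {cf1}).card := sdiff_card_ge (by simp; omega)
  have claim1 : Lv1 \ {cf1} ⊆ Le1 := by
    intro x hx
    rw [Finset.mem_sdiff, Finset.mem_singleton] at hx
    obtain ⟨cf2, hcf2⟩ : (Lf2 \ {cf1}).Nonempty := Finset.card_pos.1 (by omega)
    rw [Finset.mem_sdiff, Finset.mem_singleton] at hcf2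
    obtain ⟨cv2, hcv2⟩ : (Lv2 \ {x, cf2}).Nonempty :=
      Finset.card_pos.1 (lt_of_lt_of_le Nat.zero_lt_one
        (sdiff_card_ge (by have := pair_card_le x cf2; omega)))
    rw [Finset.mem_sdiff, Finset.mem_insert, Finset.mem_singleton] at hcv2
    push_neg at hcv2
    exact key cf1 hcf1 cf2 hcf2.1 x hx.1 cv2 hcv2.1
      (fun h => hx.2 h.symm) hcf2.2 hcv2.2.1 hcv2.2.2 (by simp)
  have claim2 : Lf2 \ {cf1} ⊆ Le1 := by
    intro y hy
    rw [Finset.mem_sdiff, Finset.mem_singleton] at hy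
    obtain ⟨cv1, hcv1⟩ : (Lv1 \ {cf1}).Nonempty := Finset.card_pos.1 (by omega)
    rw [Finset.mem_sdiff, Finset.mem_singleton] at hcv1
    obtain ⟨cv2, hcv2⟩ : (Lv2 \ {cv1, y}).Nonempty :=
      Finset.card_pos.1 (lt_of_lt_of_le Nat.zero_lt_one
        (sdiff_card_ge (by have := pair_card_le cv1 y; omega)))
    rw [Finset.mem_sdiff, Finset.mem_insert, Finset.mem_singleton] at hcv2
    push_neg at hcv2
    exact key cf1 hcf1 y hy.1 cv1 hcv1.1 cv2 hcv2.1
      (fun h => hcv1.2 h.symm) hy.2 hcv2.2.1 hcv2.2.2 (by simp)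
  have claim3 : cf1 ∈ Le1 := by
    obtain ⟨cf2, hcf2⟩ : (Lf2 \ {cf1}).Nonempty := Finset.card_pos.1 (by omega)
    rw [Finset.mem_sdiff, Finset.mem_singleton] at hcf2
    obtain ⟨cv1, hcv1⟩ : (Lv1 \ {cf1}).Nonempty := Finset.card_pos.1 (by omega)
    rw [Finset.mem_sdiff, Finset.mem_singleton] at hcv1
    obtain ⟨cv2, hcv2⟩ : (Lv2 \ {cv1, cf2}).Nonempty :=
      Finset.card_pos.1 (lt_of_lt_of_le Nat.zero_lt_one
        (sdiff_card_ge (by have := pair_card_le cv1 cf2; omega)))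
    rw [Finset.mem_sdiff, Finset.mem_insert, Finset.mem_singleton] at hcv2
    push_neg at hcv2
    exact key cf1 hcf1 cf2 hcf2.1 cv1 hcv1.1 cv2 hcv2.1
      (fun h => hcv1.2 h.symm) hcf2.2 hcv2.2.1 hcv2.2.2 (by simp)
  have hdisj : Disjoint (Lv1 \ {cf1}) (Lf2 \ {cf1}) := by
    rw [Finset.disjoint_left]
    intro a ha hb
    rw [Finset.mem_sdiff] at ha hb
    have : a ∈ Lf2 ∩ Lv1 := Finset.mem_inter.2 ⟨hb.1, ha.1⟩
    rw [hB] at this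
    exact absurd this (Finset.notMem_empty a)
  have hsub : insert cf1 ((Lv1 \ {cf1}) ∪ (Lf2 \ {cf1})) ⊆ Le1 := by
    intro a ha
    rcases Finset.mem_insert.1 ha with rfl | h
    · exact claim3
    · rcases Finset.mem_union.1 h with h | h
      · exact claim1 h
      · exact claim2 h
  have hnm : cf1 ∉ (Lv1 \ {cf1}) ∪ (Lf2 \ {cf1}) := by simp
  have hcard := Finset.card_le_card hsub
  rw [Finset.card_insert_of_notMem hnm, Finset.card_union_of_disjoint hdisj] at hcard
  omega

/-- A double edge `e_1, e_2` on vertices `v_1, v_2`, with thick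
halfedges `f_1` at `v_1` and `f_2` at `v_2`, admits a total coloring from lists with
`|L(e_i)| ≥ 5`, `|L(v_i)| ≥ 4`, `|L(f_i)| ≥ 3`, in which the two thick halfedges
receive distinct colors. -/
theorem doubleEdge_thick_halfedges_total_choosable
    (Lv1 Lv2 Le1 Le2 Lf1 Lf2 : Finset ℕ)
    (hLe1 : 5 ≤ Le1.card) (hLe2 : 5 ≤ Le2.card)
    (hLv1 : 4 ≤ Lv1.card) (hLv2 : 4 ≤ Lv2.card)
    (hLf1 : 3 ≤ Lf1.card) (hLf2 : 3 ≤ Lf2.card) :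
    ∃ (cv1 cv2 ce1 ce2 cf1 cf2 : ℕ),
      cv1 ∈ Lv1 ∧ cv2 ∈ Lv2 ∧ ce1 ∈ Le1 ∧ ce2 ∈ Le2 ∧ cf1 ∈ Lf1 ∧ cf2 ∈ Lf2 ∧
      cv1 ≠ cv2 ∧
      ce1 ≠ ce2 ∧
      ce1 ≠ cv1 ∧ ce1 ≠ cv2 ∧ ce1 ≠ cf1 ∧ ce1 ≠ cf2 ∧
      ce2 ≠ cv1 ∧ ce2 ≠ cv2 ∧ ce2 ≠ cf1 ∧ ce2 ≠ cf2 ∧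
      cf1 ≠ cv1 ∧ cf2 ≠ cv2 ∧
      cf1 ≠ cf2 := by
  obtain ⟨Le1', hs, hc⟩ := Finset.exists_subset_card_eq hLe1
  obtain ⟨cv1, cv2, ce1, ce2, cf1, cf2, h1, h2, h3, h4, h5, h6, hrest⟩ :=
    main' Lv1 Lv2 Le1' Le2 Lf1 Lf2 hc hLe2 hLv1 hLv2 hLf1 hLf2
  exact ⟨cv1, cv2, ce1, ce2, cf1, cf2, h1, h2, hs h3, h4, h5, h6, hrest⟩
end

section
/- Consider a triangle with vertices v_1, v_2, v_3 and edges e_{12}, e_{23}, e_{13}, with thick halfedges f_1 attached to v_1 and f_2 attached to v_2, and a thin halfedge f_3 attached to v_3. Suppose L assigns lists with |L(e_{ij})| ≥ 5 for each triangle edge, |L(v_i)| ≥ 4 for each vertex, |L(f_1)|, |L(f_2)| ≥ 3, and |L(f_3)| ≥ 2. Then there is a choice of a color c(x) ∈ L(x) for each element x such that: the colors of v_1, v_2, v_3 are pairwise distinct; each edge's color differs from the colors of its two endpoints and of the other two edges; each halfedge f_i receives a color distinct from c(v_i) and from the colors of the two triangle edges incident to v_i; and c(f_1) ≠ c(f_2).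 -/
/-- Helper: pick an element of a finset with positive card bound. -/
private lemma pick {s : Finset ℕ} (h : 1 ≤ s.card) : ∃ a, a ∈ s :=
  Finset.card_pos.mp h

private lemma erase_card {s : Finset ℕ} {a : ℕ} {n : ℕ} (h : n + 1 ≤ s.card) :
    n ≤ (s.erase a).card := by
  have := Finset.pred_card_le_card_erase (a := a) (s := s); omega

/-- 2-choosability of the 4-cycle, special case with a color of `L1` not in `L2`. -/
private lemma c4_of (L1 L2 L3 L4 : Finset ℕ)
    (h2 : 2 ≤ L2.card) (h3 : 2 ≤ L3.card) (h4 : 2 ≤ L4.card)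
    (c : ℕ) (hc1 : c ∈ L1) (hc2 : c ∉ L2) :
    ∃ c1 c2 c3 c4, c1 ∈ L1 ∧ c2 ∈ L2 ∧ c3 ∈ L3 ∧ c4 ∈ L4 ∧
      c1 ≠ c2 ∧ c2 ≠ c3 ∧ c3 ≠ c4 ∧ c4 ≠ c1 := by
  obtain ⟨c4, hc4⟩ := pick (s := L4.erase c) (erase_card (by omega))
  rw [Finset.mem_erase] at hc4
  obtain ⟨c3, hc3⟩ := pick (s := L3.erase c4) (erase_card (by omega))
  rw [Finset.mem_erase] at hc3
  obtain ⟨c2, hcc2⟩ := pick (s := L2.erase c3) (erase_card (by omega))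
  rw [Finset.mem_erase] at hcc2
  refine ⟨c, c2, c3, c4, hc1, hcc2.2, hc3.2, hc4.2, ?_, hcc2.1, hc3.1, hc4.1⟩
  intro h; exact hc2 (h ▸ hcc2.2)

/-- 2-choosability of the 4-cycle. -/
private lemma c4 (L1 L2 L3 L4 : Finset ℕ)
    (h1 : 2 ≤ L1.card) (h2 : 2 ≤ L2.card) (h3 : 2 ≤ L3.card) (h4 : 2 ≤ L4.card) :
    ∃ c1 c2 c3 c4, c1 ∈ L1 ∧ c2 ∈ L2 ∧ c3 ∈ L3 ∧ c4 ∈ L4 ∧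
      c1 ≠ c2 ∧ c2 ≠ c3 ∧ c3 ≠ c4 ∧ c4 ≠ c1 := by
  by_cases hs1 : L1 ⊆ L2
  · by_cases hs2 : L2 ⊆ L3
    · by_cases hs3 : L3 ⊆ L4
      · by_cases hs4 : L4 ⊆ L1
        · -- all lists equal: alternate two colors
          obtain ⟨a, ha, b, hb, hab⟩ := Finset.one_lt_card.mp h1
          exact ⟨a, b, a, b, ha, hs1 hb, hs2 (hs1 ha), hs3 (hs2 (hs1 hb)),
            hab, hab.symm, hab, hab.symm⟩
        · obtain ⟨c, hcm, hcn⟩ := Finset.not_subset.mp hs4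
          obtain ⟨d1, d2, d3, d4, m1, m2, m3, m4, n12, n23, n34, n41⟩ :=
            c4_of L4 L1 L2 L3 h1 h2 h3 c hcm hcn
          exact ⟨d2, d3, d4, d1, m2, m3, m4, m1, n23, n34, n41, n12⟩
      · obtain ⟨c, hcm, hcn⟩ := Finset.not_subset.mp hs3
        obtain ⟨d1, d2, d3, d4, m1, m2, m3, m4, n12, n23, n34, n41⟩ :=
          c4_of L3 L4 L1 L2 h4 h1 h2 c hcm hcn
        exact ⟨d3, d4, d1, d2, m3, m4, m1, m2, n34, n41, n12, n23⟩
    · obtain ⟨c, hcm, hcn⟩ := Finset.not_subset.mp hs2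
      obtain ⟨d1, d2, d3, d4, m1, m2, m3, m4, n12, n23, n34, n41⟩ :=
        c4_of L2 L3 L4 L1 h3 h4 h1 c hcm hcn
      exact ⟨d4, d1, d2, d3, m4, m1, m2, m3, n41, n12, n23, n34⟩
  · obtain ⟨c, hcm, hcn⟩ := Finset.not_subset.mp hs1
    exact c4_of L1 L2 L3 L4 h2 h3 h4 c hcm hcn

/-- Octahedron coloring when one pair's lists share a color. -/
private lemma oct_pair (A A' B B' C C' : Finset ℕ)
    (hB : 3 ≤ B.card) (hB' : 3 ≤ B'.card) (hC : 3 ≤ C.card) (hC' : 3 ≤ C'.card)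
    (c : ℕ) (hcA : c ∈ A) (hcA' : c ∈ A') :
    ∃ x1 y1 x2 y2 x3 y3, x1 ∈ A ∧ y1 ∈ A' ∧ x2 ∈ B ∧ y2 ∈ B' ∧ x3 ∈ C ∧ y3 ∈ C' ∧
      x1 ≠ x2 ∧ x1 ≠ y2 ∧ x1 ≠ x3 ∧ x1 ≠ y3 ∧ y1 ≠ x2 ∧ y1 ≠ y2 ∧ y1 ≠ x3 ∧ y1 ≠ y3 ∧
      x2 ≠ x3 ∧ x2 ≠ y3 ∧ y2 ≠ x3 ∧ y2 ≠ y3 := by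
  obtain ⟨d1, d2, d3, d4, m1, m2, m3, m4, n12, n23, n34, n41⟩ :=
    c4 (B.erase c) (C.erase c) (B'.erase c) (C'.erase c)
      (erase_card (by omega)) (erase_card (by omega)) (erase_card (by omega))
      (erase_card (by omega))
  rw [Finset.mem_erase] at m1 m2 m3 m4
  exact ⟨c, c, d1, d3, d2, d4, hcA, hcA', m1.2, m3.2, m2.2, m4.2,
    m1.1.symm, m3.1.symm, m2.1.symm, m4.1.symm,
    m1.1.symm, m3.1.symm, m2.1.symm, m4.1.symm,
    n12, n41.symm, n23.symm, n34⟩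

/-- List coloring of the octahedron `K_{2,2,2}` with pairs `(A,A')`, `(B,B')`, `(C,C')`
from lists of size at least 3. -/
private lemma oct (A A' B B' C C' : Finset ℕ)
    (hA : 3 ≤ A.card) (hA' : 3 ≤ A'.card) (hB : 3 ≤ B.card) (hB' : 3 ≤ B'.card)
    (hC : 3 ≤ C.card) (hC' : 3 ≤ C'.card) :
    ∃ x1 y1 x2 y2 x3 y3, x1 ∈ A ∧ y1 ∈ A' ∧ x2 ∈ B ∧ y2 ∈ B' ∧ x3 ∈ C ∧ y3 ∈ C' ∧
      x1 ≠ x2 ∧ x1 ≠ y2 ∧ x1 ≠ x3 ∧ x1 ≠ y3 ∧ y1 ≠ x2 ∧ y1 ≠ y2 ∧ y1 ≠ x3 ∧ y1 ≠ y3 ∧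
      x2 ≠ x3 ∧ x2 ≠ y3 ∧ y2 ≠ x3 ∧ y2 ≠ y3 := by
  by_cases hp1 : (A ∩ A').Nonempty
  · obtain ⟨c, hc⟩ := hp1; rw [Finset.mem_inter] at hc
    exact oct_pair A A' B B' C C' hB hB' hC hC' c hc.1 hc.2
  by_cases hp2 : (B ∩ B').Nonempty
  · obtain ⟨c, hc⟩ := hp2; rw [Finset.mem_inter] at hc
    obtain ⟨p, p', q, q', r, r', mp, mp', mq, mq', mr, mr',
      i1, i2, i3, i4, i5, i6, i7, i8, i9, i10, i11, i12⟩ :=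
      oct_pair B B' A A' C C' hA hA' hC hC' c hc.1 hc.2
    exact ⟨q, q', p, p', r, r', mq, mq', mp, mp', mr, mr',
      i1.symm, i5.symm, i9, i10, i2.symm, i6.symm, i11, i12,
      i3, i4, i7, i8⟩
  by_cases hp3 : (C ∩ C').Nonempty
  · obtain ⟨c, hc⟩ := hp3; rw [Finset.mem_inter] at hc
    obtain ⟨p, p', q, q', r, r', mp, mp', mq, mq', mr, mr',
      i1, i2, i3, i4, i5, i6, i7, i8, i9, i10, i11, i12⟩ :=
      oct_pair C C' A A' B B' hA hA' hB hB' c hc.1 hc.2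
    exact ⟨q, q', r, r', p, p', mq, mq', mr, mr', mp, mp',
      i9, i10, i1.symm, i5.symm, i11, i12, i2.symm, i6.symm,
      i3.symm, i7.symm, i4.symm, i8.symm⟩
  · -- all three pairs have disjoint lists: find a system of distinct representatives
    have dA : Disjoint A A' := by
      rw [Finset.disjoint_iff_inter_eq_empty, ← Finset.not_nonempty_iff_eq_empty]; exact hp1
    have dB : Disjoint B B' := by
      rw [Finset.disjoint_iff_inter_eq_empty, ← Finset.not_nonempty_iff_eq_empty]; exact hp2
    have dC : Disjoint C C' := by
      rw [Finset.disjoint_iff_inter_eq_empty, ← Finset.not_nonempty_iff_eq_empty]; exact hp3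
    set t : Fin 6 → Finset ℕ := ![A, A', B, B', C, C'] with ht
    have htcard : ∀ i, 3 ≤ (t i).card := by
      intro i; fin_cases i <;> simpa [ht]
    have hall : ∀ s : Finset (Fin 6), s.card ≤ (s.biUnion t).card := by
      intro s
      rcases Nat.lt_or_ge s.card 4 with h | h
      · rcases s.eq_empty_or_nonempty with rfl | ⟨i, hi⟩
        · simp
        · have hsub : t i ⊆ s.biUnion t := fun x hx => Finset.mem_biUnion.mpr ⟨i, hi, hx⟩
          have := htcard i
          have := Finset.card_le_card hsub
          omega
      · have key : ((0 : Fin 6) ∈ s ∧ (1 : Fin 6) ∈ s) ∨ ((2 : Fin 6) ∈ s ∧ (3 : Fin 6) ∈ s)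
            ∨ ((4 : Fin 6) ∈ s ∧ (5 : Fin 6) ∈ s) := by
          revert h
          have : ∀ s : Finset (Fin 6), 4 ≤ s.card →
              (((0 : Fin 6) ∈ s ∧ (1 : Fin 6) ∈ s) ∨ ((2 : Fin 6) ∈ s ∧ (3 : Fin 6) ∈ s)
              ∨ ((4 : Fin 6) ∈ s ∧ (5 : Fin 6) ∈ s)) := by decide
          exact this s
        have hs6 : s.card ≤ 6 := by
          have := Finset.card_le_univ s; simpa using this
        have main : ∀ X Y : Finset ℕ, Disjoint X Y → 3 ≤ X.card → 3 ≤ Y.card →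
            X ⊆ s.biUnion t → Y ⊆ s.biUnion t → s.card ≤ (s.biUnion t).card := by
          intro X Y hd hX hY hXs hYs
          have hsub : X ∪ Y ⊆ s.biUnion t := Finset.union_subset hXs hYs
          have := Finset.card_le_card hsub
          rw [Finset.card_union_of_disjoint hd] at this
          omega
        rcases key with ⟨h0, h1⟩ | ⟨h2, h3⟩ | ⟨h4, h5⟩
        · exact main A A' dA hA hA'
            (fun x hx => Finset.mem_biUnion.mpr ⟨0, h0, by simpa [ht] using hx⟩)
            (fun x hx => Finset.mem_biUnion.mpr ⟨1, h1, by simpa [ht] using hx⟩)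
        · exact main B B' dB hB hB'
            (fun x hx => Finset.mem_biUnion.mpr ⟨2, h2, by simpa [ht] using hx⟩)
            (fun x hx => Finset.mem_biUnion.mpr ⟨3, h3, by simpa [ht] using hx⟩)
        · exact main C C' dC hC hC'
            (fun x hx => Finset.mem_biUnion.mpr ⟨4, h4, by simpa [ht] using hx⟩)
            (fun x hx => Finset.mem_biUnion.mpr ⟨5, h5, by simpa [ht] using hx⟩)
    obtain ⟨f, hinj, hmem⟩ := (Finset.all_card_le_biUnion_card_iff_exists_injective t).mp hall
    have hne : ∀ i j : Fin 6, i ≠ j → f i ≠ f j := fun i j hij h => hij (hinj h)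
    refine ⟨f 0, f 1, f 2, f 3, f 4, f 5, ?_, ?_, ?_, ?_, ?_, ?_,
      hne 0 2 (by decide), hne 0 3 (by decide), hne 0 4 (by decide), hne 0 5 (by decide),
      hne 1 2 (by decide), hne 1 3 (by decide), hne 1 4 (by decide), hne 1 5 (by decide),
      hne 2 4 (by decide), hne 2 5 (by decide), hne 3 4 (by decide), hne 3 5 (by decide)⟩
    · simpa [ht] using hmem 0
    · simpa [ht] using hmem 1
    · simpa [ht] using hmem 2
    · simpa [ht] using hmem 3
    · simpa [ht] using hmem 4
    · simpa [ht] using hmem 5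

/-- A triangle `v_1 v_2 v_3` with edges `e_12, e_23, e_13`, thick
halfedges `f_1` at `v_1` and `f_2` at `v_2`, and a thin halfedge `f_3` at `v_3`,
admits a total coloring from lists with `|L(e)| ≥ 5`, `|L(v)| ≥ 4`,
`|L(f_1)|, |L(f_2)| ≥ 3`, `|L(f_3)| ≥ 2`, in which `f_1` and `f_2` receive
distinct colors. -/
theorem triangle_with_halfedges_total_choosable
    (Lv1 Lv2 Lv3 Le12 Le23 Le13 Lf1 Lf2 Lf3 : Finset ℕ)
    (hLe12 : 5 ≤ Le12.card) (hLe23 : 5 ≤ Le23.card) (hLe13 : 5 ≤ Le13.card)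
    (hLv1 : 4 ≤ Lv1.card) (hLv2 : 4 ≤ Lv2.card) (hLv3 : 4 ≤ Lv3.card)
    (hLf1 : 3 ≤ Lf1.card) (hLf2 : 3 ≤ Lf2.card) (hLf3 : 2 ≤ Lf3.card) :
    ∃ (cv1 cv2 cv3 ce12 ce23 ce13 cf1 cf2 cf3 : ℕ),
      cv1 ∈ Lv1 ∧ cv2 ∈ Lv2 ∧ cv3 ∈ Lv3 ∧
      ce12 ∈ Le12 ∧ ce23 ∈ Le23 ∧ ce13 ∈ Le13 ∧
      cf1 ∈ Lf1 ∧ cf2 ∈ Lf2 ∧ cf3 ∈ Lf3 ∧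
      -- the vertex colors are pairwise distinct
      cv1 ≠ cv2 ∧ cv2 ≠ cv3 ∧ cv1 ≠ cv3 ∧
      -- each edge differs from its two endpoints and from the other two edges
      ce12 ≠ cv1 ∧ ce12 ≠ cv2 ∧ ce23 ≠ cv2 ∧ ce23 ≠ cv3 ∧ ce13 ≠ cv1 ∧ ce13 ≠ cv3 ∧
      ce12 ≠ ce23 ∧ ce23 ≠ ce13 ∧ ce12 ≠ ce13 ∧
      -- each halfedge differs from its vertex and the two incident triangle edges
      cf1 ≠ cv1 ∧ cf1 ≠ ce12 ∧ cf1 ≠ ce13 ∧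
      cf2 ≠ cv2 ∧ cf2 ≠ ce12 ∧ cf2 ≠ ce23 ∧
      cf3 ≠ cv3 ∧ cf3 ≠ ce23 ∧ cf3 ≠ ce13 ∧
      -- the two thick halfedges receive distinct colors
      cf1 ≠ cf2 := by
  -- choose the color of the thin halfedge `f_3` first
  obtain ⟨a, ha⟩ := pick (s := Lf3) (by omega)
  -- choose the colors of the thick halfedges `f_1` and `f_2`
  obtain ⟨cf1, hcf1⟩ := pick (s := Lf1) (by omega)
  obtain ⟨cf2, hcf2'⟩ := pick (s := Lf2.erase cf1) (erase_card (by omega))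
  rw [Finset.mem_erase] at hcf2'
  -- color the remaining octahedron `K_{2,2,2}` with pairs (v1,e23), (v2,e13), (v3,e12)
  obtain ⟨cv1, ce23, cv2, ce13, cv3, ce12, m1, m2, m3, m4, m5, m6,
      i1, i2, i3, i4, i5, i6, i7, i8, i9, i10, i11, i12⟩ :=
    oct (Lv1.erase cf1) ((Le23.erase a).erase cf2) (Lv2.erase cf2)
      ((Le13.erase a).erase cf1) (Lv3.erase a) ((Le12.erase cf1).erase cf2)
      (erase_card (by omega)) (erase_card (erase_card (by omega)))
      (erase_card (by omega)) (erase_card (erase_card (by omega)))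
      (erase_card (by omega)) (erase_card (erase_card (by omega)))
  rw [Finset.mem_erase] at m1 m3 m5
  rw [Finset.mem_erase, Finset.mem_erase] at m2 m4 m6
  exact ⟨cv1, cv2, cv3, ce12, ce23, ce13, cf1, cf2, a,
    m1.2, m3.2, m5.2, m6.2.2, m2.2.2, m4.2.2, hcf1, hcf2'.2, ha,
    i1, i9, i3,
    i4.symm, i10.symm, i5, i7, i2.symm, i11,
    i8.symm, i6, i12.symm,
    m1.1.symm, m6.2.1.symm, m4.1.symm,
    m3.1.symm, m6.1.symm, m2.1.symm,
    m5.1.symm, m2.2.1.symm, m4.2.1.symm,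
    hcf2'.1.symm⟩
end

section
/- Consider a multigraph configuration consisting of two vertices v_1, v_2 joined by two parallel edges e_1, e_2, with a thin halfedge f_1 attached to v_1 and a thin halfedge f_2 attached to v_2. Suppose L assigns lists of colors with |L(e_1)|, |L(e_2)| ≥ 5, |L(v_1)|, |L(v_2)| ≥ 4, and |L(f_1)|, |L(f_2)| ≥ 2. Then there is a choice of a color c(x) ∈ L(x) for each element x such that: c(v_1) ≠ c(v_2); c(e_1) ≠ c(e_2); c(e_1) and c(e_2) each differ from c(v_1), c(v_2), c(f_1), and c(f_2); c(f_1) ≠ c(v_1); and c(f_2) ≠ c(v_2). -/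
private lemma pick_ne_aux (L : Finset ℕ) (x : ℕ) (h : 2 ≤ L.card) : ∃ a ∈ L, a ≠ x := by
  have h1 : L.card - ({x} : Finset ℕ).card ≤ (L \ {x}).card := Finset.le_card_sdiff {x} L
  simp at h1
  have : (L \ {x}).Nonempty := Finset.card_pos.mp (by omega)
  obtain ⟨a, ha⟩ := this
  rw [Finset.mem_sdiff, Finset.mem_singleton] at ha
  exact ⟨a, ha.1, ha.2⟩

private lemma le_card_sdiff' (L T S : Finset ℕ) (h : ∀ x ∈ L, x ∈ T → x ∈ S) :
    L.card - S.card ≤ (L \ T).card := by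
  have hsub : L \ S ⊆ L \ T := by
    intro x hx
    rw [Finset.mem_sdiff] at hx ⊢
    exact ⟨hx.1, fun hT => hx.2 (h x hx.1 hT)⟩
  calc L.card - S.card ≤ (L \ S).card := Finset.le_card_sdiff S L
    _ ≤ (L \ T).card := Finset.card_le_card hsub

private lemma finish_aux (Le1 Le2 T : Finset ℕ)
    (h1 : 1 ≤ (Le1 \ T).card) (h2 : 2 ≤ (Le2 \ T).card) :
    ∃ ce1 ce2, ce1 ∈ Le1 ∧ ce2 ∈ Le2 ∧ ce1 ∉ T ∧ ce2 ∉ T ∧ ce1 ≠ ce2 := by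
  obtain ⟨ce1, hce1⟩ := Finset.card_pos.mp (by omega : 0 < (Le1 \ T).card)
  obtain ⟨ce2, hce2, hne⟩ := pick_ne_aux (Le2 \ T) ce1 h2
  rw [Finset.mem_sdiff] at hce1 hce2
  exact ⟨ce1, ce2, hce1.1, hce2.1, hce1.2, hce2.2, fun h => hne h.symm⟩

/-- A double edge `e_1, e_2` on vertices `v_1, v_2`, with thin
halfedges `f_1` at `v_1` and `f_2` at `v_2`, admits a total coloring from lists with
`|L(e_i)| ≥ 5`, `|L(v_i)| ≥ 4`, `|L(f_i)| ≥ 2`. -/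
theorem doubleEdge_thin_halfedges_total_choosable
    (Lv1 Lv2 Le1 Le2 Lf1 Lf2 : Finset ℕ)
    (hLe1 : 5 ≤ Le1.card) (hLe2 : 5 ≤ Le2.card)
    (hLv1 : 4 ≤ Lv1.card) (hLv2 : 4 ≤ Lv2.card)
    (hLf1 : 2 ≤ Lf1.card) (hLf2 : 2 ≤ Lf2.card) :
    ∃ (cv1 cv2 ce1 ce2 cf1 cf2 : ℕ),
      cv1 ∈ Lv1 ∧ cv2 ∈ Lv2 ∧ ce1 ∈ Le1 ∧ ce2 ∈ Le2 ∧ cf1 ∈ Lf1 ∧ cf2 ∈ Lf2 ∧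
      cv1 ≠ cv2 ∧
      ce1 ≠ ce2 ∧
      ce1 ≠ cv1 ∧ ce1 ≠ cv2 ∧ ce1 ≠ cf1 ∧ ce1 ≠ cf2 ∧
      ce2 ≠ cv1 ∧ ce2 ≠ cv2 ∧ ce2 ≠ cf1 ∧ ce2 ≠ cf2 ∧
      cf1 ≠ cv1 ∧ cf2 ≠ cv2 := by
  classical
  have cardT4 : ∀ a b c d : ℕ, (insert a (insert b (insert c ({d} : Finset ℕ)))).card ≤ 4 := by
    intro a b c d
    have h1 := Finset.card_insert_le a (insert b (insert c ({d} : Finset ℕ)))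
    have h2 := Finset.card_insert_le b (insert c ({d} : Finset ℕ))
    have h3 := Finset.card_insert_le c ({d} : Finset ℕ)
    simp at *
    omega
  have cardT3 : ∀ a b c : ℕ, (insert a (insert b ({c} : Finset ℕ))).card ≤ 3 := by
    intro a b c
    have h1 := Finset.card_insert_le a (insert b ({c} : Finset ℕ))
    have h2 := Finset.card_insert_le b ({c} : Finset ℕ)
    simp at *
    omega
  by_cases hcase1 : (Lf1 ∩ Lv2).Nonempty
  · -- take cf1 = cv2 = c, so the forbidden set has only 3 elements
    obtain ⟨c, hc⟩ := hcase1
    rw [Finset.mem_inter] at hc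
    obtain ⟨cv1, hcv1, hcv1c⟩ := pick_ne_aux Lv1 c (by omega)
    obtain ⟨cf2, hcf2, hcf2c⟩ := pick_ne_aux Lf2 c hLf2
    set T : Finset ℕ := insert cv1 (insert c ({cf2} : Finset ℕ)) with hT
    have hTcard : T.card ≤ 3 := cardT3 _ _ _
    have h1 : 1 ≤ (Le1 \ T).card := by
      have := Finset.le_card_sdiff T Le1; omega
    have h2 : 2 ≤ (Le2 \ T).card := by
      have := Finset.le_card_sdiff T Le2; omega
    obtain ⟨ce1, ce2, he1, he2, hn1, hn2, hne⟩ := finish_aux Le1 Le2 T h1 h2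
    rw [hT] at hn1 hn2
    simp only [Finset.mem_insert, Finset.mem_singleton, not_or] at hn1 hn2
    exact ⟨cv1, c, ce1, ce2, c, cf2, hcv1, hc.2, he1, he2, hc.1, hcf2,
      hcv1c, hne, hn1.1, hn1.2.1, hn1.2.1, hn1.2.2, hn2.1, hn2.2.1, hn2.2.1, hn2.2.2,
      fun h => hcv1c h.symm, hcf2c⟩
  · by_cases hcase2 : (Lf1 \ Le2).Nonempty
    · -- cf1 ∉ Le2, so Le2 loses at most 3 elements
      obtain ⟨cf1, hcf1'⟩ := hcase2
      rw [Finset.mem_sdiff] at hcf1'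
      obtain ⟨hcf1, hcf1e⟩ := hcf1'
      obtain ⟨cv1, hcv1, hcv1f⟩ := pick_ne_aux Lv1 cf1 (by omega)
      obtain ⟨cv2, hcv2, hcv2v⟩ := pick_ne_aux Lv2 cv1 (by omega)
      obtain ⟨cf2, hcf2, hcf2v⟩ := pick_ne_aux Lf2 cv2 hLf2
      set T : Finset ℕ := insert cv1 (insert cv2 (insert cf1 ({cf2} : Finset ℕ))) with hT
      have hT4 : T.card ≤ 4 := cardT4 _ _ _ _
      have h1 : 1 ≤ (Le1 \ T).card := by
        have := Finset.le_card_sdiff T Le1; omega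
      have h2 : 2 ≤ (Le2 \ T).card := by
        have key := le_card_sdiff' Le2 T (insert cv1 (insert cv2 ({cf2} : Finset ℕ))) ?_
        · have := cardT3 cv1 cv2 cf2; omega
        · intro x hx hxT
          rw [hT] at hxT
          simp only [Finset.mem_insert, Finset.mem_singleton] at hxT ⊢
          rcases hxT with h | h | h | h
          · exact Or.inl h
          · exact Or.inr (Or.inl h)
          · exact absurd (h ▸ hx) hcf1e
          · exact Or.inr (Or.inr h)
      obtain ⟨ce1, ce2, he1, he2, hn1, hn2, hne⟩ := finish_aux Le1 Le2 T h1 h2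
      rw [hT] at hn1 hn2
      simp only [Finset.mem_insert, Finset.mem_singleton, not_or] at hn1 hn2
      exact ⟨cv1, cv2, ce1, ce2, cf1, cf2, hcv1, hcv2, he1, he2, hcf1, hcf2,
        fun h => hcv2v h.symm, hne, hn1.1, hn1.2.1, hn1.2.2.1, hn1.2.2.2,
        hn2.1, hn2.2.1, hn2.2.2.1, hn2.2.2.2, fun h => hcv1f h.symm, hcf2v⟩
    · by_cases hcase3 : (Lv2 \ Le2).Nonempty
      · -- cv2 ∉ Le2
        obtain ⟨cv2, hcv2'⟩ := hcase3
        rw [Finset.mem_sdiff] at hcv2'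
        obtain ⟨hcv2, hcv2e⟩ := hcv2'
        obtain ⟨cv1, hcv1, hcv1v⟩ := pick_ne_aux Lv1 cv2 (by omega)
        obtain ⟨cf1, hcf1, hcf1v⟩ := pick_ne_aux Lf1 cv1 hLf1
        obtain ⟨cf2, hcf2, hcf2v⟩ := pick_ne_aux Lf2 cv2 hLf2
        set T : Finset ℕ := insert cv1 (insert cv2 (insert cf1 ({cf2} : Finset ℕ))) with hT
        have hT4 : T.card ≤ 4 := cardT4 _ _ _ _
        have h1 : 1 ≤ (Le1 \ T).card := by
          have := Finset.le_card_sdiff T Le1; omega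
        have h2 : 2 ≤ (Le2 \ T).card := by
          have key := le_card_sdiff' Le2 T (insert cv1 (insert cf1 ({cf2} : Finset ℕ))) ?_
          · have := cardT3 cv1 cf1 cf2; omega
          · intro x hx hxT
            rw [hT] at hxT
            simp only [Finset.mem_insert, Finset.mem_singleton] at hxT ⊢
            rcases hxT with h | h | h | h
            · exact Or.inl h
            · exact absurd (h ▸ hx) hcv2e
            · exact Or.inr (Or.inl h)
            · exact Or.inr (Or.inr h)
        obtain ⟨ce1, ce2, he1, he2, hn1, hn2, hne⟩ := finish_aux Le1 Le2 T h1 h2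
        rw [hT] at hn1 hn2
        simp only [Finset.mem_insert, Finset.mem_singleton, not_or] at hn1 hn2
        exact ⟨cv1, cv2, ce1, ce2, cf1, cf2, hcv1, hcv2, he1, he2, hcf1, hcf2,
          hcv1v, hne, hn1.1, hn1.2.1, hn1.2.2.1, hn1.2.2.2,
          hn2.1, hn2.2.1, hn2.2.2.1, hn2.2.2.2, hcf1v, hcf2v⟩
      · -- Lf1 ⊆ Le2, Lv2 ⊆ Le2, Lf1 ∩ Lv2 = ∅, hence Le2.card ≥ 6
        have hLf1sub : Lf1 ⊆ Le2 := by
          intro x hx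
          by_contra hxe
          exact hcase2 ⟨x, Finset.mem_sdiff.mpr ⟨hx, hxe⟩⟩
        have hLv2sub : Lv2 ⊆ Le2 := by
          intro x hx
          by_contra hxe
          exact hcase3 ⟨x, Finset.mem_sdiff.mpr ⟨hx, hxe⟩⟩
        have hdisj : Disjoint Lf1 Lv2 := by
          rw [Finset.disjoint_left]
          intro x hx1 hx2
          exact hcase1 ⟨x, Finset.mem_inter.mpr ⟨hx1, hx2⟩⟩
        have hbig : 6 ≤ Le2.card := by
          have hsub : Lf1 ∪ Lv2 ⊆ Le2 := Finset.union_subset hLf1sub hLv2sub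
          have hcard : (Lf1 ∪ Lv2).card = Lf1.card + Lv2.card :=
            Finset.card_union_of_disjoint hdisj
          have := Finset.card_le_card hsub
          omega
        obtain ⟨cv1, hcv1⟩ := Finset.card_pos.mp (by omega : 0 < Lv1.card)
        obtain ⟨cv2, hcv2, hcv2v⟩ := pick_ne_aux Lv2 cv1 (by omega)
        obtain ⟨cf1, hcf1, hcf1v⟩ := pick_ne_aux Lf1 cv1 hLf1
        obtain ⟨cf2, hcf2, hcf2v⟩ := pick_ne_aux Lf2 cv2 hLf2
        set T : Finset ℕ := insert cv1 (insert cv2 (insert cf1 ({cf2} : Finset ℕ))) with hT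
        have hT4 : T.card ≤ 4 := cardT4 _ _ _ _
        have h1 : 1 ≤ (Le1 \ T).card := by
          have := Finset.le_card_sdiff T Le1; omega
        have h2 : 2 ≤ (Le2 \ T).card := by
          have := Finset.le_card_sdiff T Le2; omega
        obtain ⟨ce1, ce2, he1, he2, hn1, hn2, hne⟩ := finish_aux Le1 Le2 T h1 h2
        rw [hT] at hn1 hn2
        simp only [Finset.mem_insert, Finset.mem_singleton, not_or] at hn1 hn2
        exact ⟨cv1, cv2, ce1, ce2, cf1, cf2, hcv1, hcv2, he1, he2, hcf1, hcf2,
          fun h => hcv2v h.symm, hne, hn1.1, hn1.2.1, hn1.2.2.1, hn1.2.2.2,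
          hn2.1, hn2.2.1, hn2.2.2.1, hn2.2.2.2, hcf1v, hcf2v⟩
end

section
/- Let L assign to each of the 4 vertices of the complete graph K_4 a list of at least 4 colors and to each of its 6 edges a list of at least 5 colors. Then K_4 admits an L-total-coloring: there is a choice of a color from each element's list such that adjacent vertices receive distinct colors, edges sharing an endpoint receive distinct colors, and each edge's color differs from the colors of its two endpoints. -/
/-!
Colour the vertices with distinct colours from their lists; every edge then keeps at least
three admissible colours, those of its list avoiding the colours of its endpoints. Edges of
`K₄` conflict exactly when they lie in different perfect matchings, so it remains to colour the
octahedron `K_{2,2,2}` from lists of size 3. A complete multipartite graph with `k` parts of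
size at most 2 is `k`-choosable: if the two vertices of a part share an admissible colour, give
it to both and recurse on the other parts with that colour deleted; otherwise the lists within
each part are disjoint, so a set of vertices meeting some part twice sees at least `2k` colours,
Hall's condition holds, and all vertices get distinct colours.
-/

open Finset SimpleGraph

theorem Finset.eq_or_eq_of_card_le_two {β : Type*} {t : Finset β} (ht : #t ≤ 2) {a b c : β}
    (ha : a ∈ t) (hb : b ∈ t) (hc : c ∈ t) (hab : a ≠ b) : c = a ∨ c = b := by
  by_contra! h
  exact ht.not_gt (two_lt_card.mpr ⟨c, hc, a, ha, b, hb, h.1, h.2, hab⟩)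

section ListColoring

variable {β ι α : Type*} [DecidableEq ι] [DecidableEq α]

theorem card_le_card_biUnion_of_disjoint_parts (p : β → ι) (L : β → Finset α) {s u : Finset β}
    (hpart : ∀ b ∈ s, #{b' ∈ s | p b' = p b} ≤ 2) (hL : ∀ b ∈ s, #(s.image p) ≤ #(L b))
    (hdisj : ∀ b ∈ s, ∀ b' ∈ s, b ≠ b' → p b = p b' → Disjoint (L b) (L b')) (hu : u ⊆ s) :
    #u ≤ #(u.biUnion L) := by
  by_cases hinj : Set.InjOn p u
  · obtain rfl | ⟨b, hb⟩ := u.eq_empty_or_nonempty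
    · simp
    calc #u = #(u.image p) := (card_image_of_injOn hinj).symm
      _ ≤ #(s.image p) := card_le_card (image_subset_image hu)
      _ ≤ #(L b) := hL b (hu hb)
      _ ≤ #(u.biUnion L) := card_le_card (subset_biUnion_of_mem L hb)
  · obtain ⟨b, hb, b', hb', hpb, hne⟩ : ∃ b ∈ u, ∃ b' ∈ u, p b = p b' ∧ b ≠ b' := by
      simpa [Set.InjOn] using hinj
    calc #u ≤ #s := card_le_card hu
      _ ≤ 2 * #(s.image p) := card_le_mul_card_image s 2 (by simpa using hpart)
      _ ≤ #(L b) + #(L b') := by have := hL b (hu hb); have := hL b' (hu hb'); omega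
      _ = #(L b ∪ L b') := (card_union_of_disjoint (hdisj b (hu hb) b' (hu hb') hne hpb)).symm
      _ ≤ #(u.biUnion L) :=
        card_le_card (union_subset (subset_biUnion_of_mem L hb) (subset_biUnion_of_mem L hb'))

variable [Nonempty α]

theorem exists_injOn_mem_of_disjoint_parts (p : β → ι) (L : β → Finset α) (s : Finset β)
    (hpart : ∀ b ∈ s, #{b' ∈ s | p b' = p b} ≤ 2) (hL : ∀ b ∈ s, #(s.image p) ≤ #(L b))
    (hdisj : ∀ b ∈ s, ∀ b' ∈ s, b ≠ b' → p b = p b' → Disjoint (L b) (L b')) :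
    ∃ c : β → α, (∀ b ∈ s, c b ∈ L b) ∧ Set.InjOn c s := by
  classical
  obtain ⟨f, hf, hfL⟩ := (all_card_le_biUnion_card_iff_exists_injective fun b : s => L b).mp
    fun u => by
      simpa [image_biUnion, card_image_of_injective _ Subtype.val_injective] using
        card_le_card_biUnion_of_disjoint_parts p L hpart hL hdisj (u := u.image (↑))
          (by simp +contextual [subset_iff])
  refine ⟨fun b => if hb : b ∈ s then f ⟨b, hb⟩ else Classical.arbitrary α, fun b hb => ?_,
    fun b hb b' hb' h => ?_⟩
  · simpa [hb] using hfL ⟨b, hb⟩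
  · simp only [mem_coe.mp hb, mem_coe.mp hb', dite_true] at h
    simpa using hf h

/-- The parts are the fibres of `p` on `s`, so `c` is a proper `L`-colouring of the complete
multipartite graph they span; with singleton parts this is the complete graph on `s`. -/
theorem exists_listColoring_of_parts_card_le_two (p : β → ι) (L : β → Finset α) (s : Finset β)
    (hpart : ∀ b ∈ s, #{b' ∈ s | p b' = p b} ≤ 2) (hL : ∀ b ∈ s, #(s.image p) ≤ #(L b)) :
    ∃ c : β → α, (∀ b ∈ s, c b ∈ L b) ∧ ∀ b ∈ s, ∀ b' ∈ s, p b ≠ p b' → c b ≠ c b' := by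
  induction s using Finset.strongInduction generalizing L with
  | H s ih =>
  by_cases hdisj : ∀ b ∈ s, ∀ b' ∈ s, b ≠ b' → p b = p b' → Disjoint (L b) (L b')
  · obtain ⟨c, hcL, hinj⟩ := exists_injOn_mem_of_disjoint_parts p L s hpart hL hdisj
    exact ⟨c, hcL, fun b hb b' hb' hp h => hp (congrArg p (hinj hb hb' h))⟩
  push Not at hdisj
  obtain ⟨b₀, hb₀, b₁, hb₁, hne, hp, hnd⟩ := hdisj
  obtain ⟨x, hx₀, hx₁⟩ := not_disjoint_iff.mp hnd
  have hpart₀ {b : β} (hb : b ∈ s) (hpb : p b = p b₀) : b = b₀ ∨ b = b₁ :=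
    eq_or_eq_of_card_le_two (hpart b₀ hb₀) (by simp [hb₀]) (by simp [hb₁, hp]) (by simp [hb, hpb])
      hne
  set s' := {b ∈ s | p b ≠ p b₀}
  have hs'_mem {b : β} (hb : b ∈ s) (hpb : p b ≠ p b₀) : b ∈ s' := mem_filter.mpr ⟨hb, hpb⟩
  have himage : s'.image p = (s.image p).erase (p b₀) := by
    rw [← filter_ne', filter_image]
  obtain ⟨c', hc'L, hc'ne⟩ := ih s' (filter_ssubset.mpr ⟨b₀, hb₀, by simp⟩)
    (fun b => (L b).erase x)
    (fun b hb => (card_le_card (filter_subset_filter _ (filter_subset _ s))).trans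
      (hpart b (filter_subset _ s hb)))
    (fun b hb => by
      have := hL b (filter_subset _ s hb)
      have := card_erase_of_mem (mem_image_of_mem p hb₀)
      have := pred_card_le_card_erase (s := L b) (a := x)
      rw [himage]; omega)
  refine ⟨fun b => if p b = p b₀ then x else c' b, fun b hb => ?_, fun b hb b' hb' hbb' => ?_⟩
  · by_cases hpb : p b = p b₀
    · rcases hpart₀ hb hpb with rfl | rfl <;> simpa [hpb]
    · simpa [hpb] using mem_of_mem_erase (hc'L b (hs'_mem hb hpb))
  · by_cases hpb : p b = p b₀ <;> by_cases hpb' : p b' = p b₀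
    · exact absurd (hpb.trans hpb'.symm) hbb'
    · simpa [hpb, hpb'] using (ne_of_mem_erase (hc'L b' (hs'_mem hb' hpb'))).symm
    · simpa [hpb, hpb'] using ne_of_mem_erase (hc'L b (hs'_mem hb hpb))
    · simpa [hpb, hpb'] using hc'ne b (hs'_mem hb hpb) b' (hs'_mem hb' hpb') hbb'

end ListColoring

/-- Disjoint edges of `K₄` have the same xor of endpoints, so the fibres of this map are the
three perfect matchings of `K₄`. -/
def k4Matching : Sym2 (Fin 4) → ℕ :=
  Sym2.lift ⟨fun u v => u.val ^^^ v.val, fun _ _ => Nat.xor_comm _ _⟩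

theorem k4Matching_ne_of_adj :
    ∀ e ∈ (completeGraph (Fin 4)).edgeFinset, ∀ f ∈ (completeGraph (Fin 4)).edgeFinset,
      e ≠ f → (∃ x, x ∈ e ∧ x ∈ f) → k4Matching e ≠ k4Matching f := by
  decide

theorem card_filter_k4Matching_le_two :
    ∀ e ∈ (completeGraph (Fin 4)).edgeFinset,
      #{f ∈ (completeGraph (Fin 4)).edgeFinset | k4Matching f = k4Matching e} ≤ 2 := by
  decide

theorem card_image_k4Matching : #((completeGraph (Fin 4)).edgeFinset.image k4Matching) = 3 := by
  decide

/-- The complete graph `K_4` admits an `L`-total-coloring whenever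
`L` gives each vertex a list of at least 4 colors and each edge a list of at
least 5 colors. -/
theorem K4_total_choosable
    (Lv : Fin 4 → Finset ℕ) (Le : Sym2 (Fin 4) → Finset ℕ)
    (hLv : ∀ v : Fin 4, 4 ≤ (Lv v).card)
    (hLe : ∀ e ∈ (SimpleGraph.completeGraph (Fin 4)).edgeSet, 5 ≤ (Le e).card) :
    ∃ (cv : Fin 4 → ℕ) (ce : Sym2 (Fin 4) → ℕ),
      (∀ v : Fin 4, cv v ∈ Lv v) ∧
      (∀ e ∈ (SimpleGraph.completeGraph (Fin 4)).edgeSet, ce e ∈ Le e) ∧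
      (∀ u w : Fin 4, (SimpleGraph.completeGraph (Fin 4)).Adj u w → cv u ≠ cv w) ∧
      (∀ e ∈ (SimpleGraph.completeGraph (Fin 4)).edgeSet, ∀ f ∈ (SimpleGraph.completeGraph (Fin 4)).edgeSet,
        e ≠ f → (∃ x : Fin 4, x ∈ e ∧ x ∈ f) → ce e ≠ ce f) ∧
      (∀ v : Fin 4, ∀ e ∈ (SimpleGraph.completeGraph (Fin 4)).edgeSet, v ∈ e → cv v ≠ ce e) := by
  obtain ⟨cv, hcvL, hcv⟩ :=
    exists_listColoring_of_parts_card_le_two id Lv univ (by simp [filter_eq']) (by simpa using hLv)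
  have hLe' (e : Sym2 (Fin 4)) (he : e ∈ (completeGraph (Fin 4)).edgeSet) :
      3 ≤ #(Le e \ e.toFinset.image cv) := by
    have := hLe e he
    have := le_card_sdiff (e.toFinset.image cv) (Le e)
    have := (card_image_le (s := e.toFinset) (f := cv)).trans_eq
      (Sym2.card_toFinset_of_not_isDiag e (not_isDiag_of_mem_edgeSet _ he))
    omega
  obtain ⟨ce, hceL, hce⟩ := exists_listColoring_of_parts_card_le_two k4Matching
    (fun e => Le e \ e.toFinset.image cv) _ card_filter_k4Matching_le_two
    (fun e he => card_image_k4Matching.trans_le (hLe' e (mem_edgeFinset.mp he)))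
  have hce' {e} (he : e ∈ (completeGraph (Fin 4)).edgeSet) :=
    mem_sdiff.mp (hceL e (mem_edgeFinset.mpr he))
  refine ⟨cv, ce, fun v => hcvL v (mem_univ v), fun e he => (hce' he).1,
    fun u w huw => hcv u (mem_univ u) w (mem_univ w) huw, fun e he f hf hef hx => ?_,
    fun v e he hv h => (hce' he).2 (h ▸ mem_image_of_mem cv (Sym2.mem_toFinset.mpr hv))⟩
  rw [← mem_edgeFinset] at he hf
  exact hce e he f hf (k4Matching_ne_of_adj e he f hf hef hx)
end

section
/- Let G be a finite k-regular simple graph with k ≥ 2. Then G contains an induced cycle C with the following property: if there exist two vertices of C that have a common neighbor not on C, then C has length at most 4. -/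
/-!
Take a shortest cycle `C` of `G`; it exists because a graph of minimum degree at least two is not
a forest. A chord of `C` would close a strictly shorter cycle, so `C` is induced. If a vertex `y`
off `C` is adjacent to two vertices of `C`, these are joined along `C` by an arc of length
`d ≤ |C| / 2`, and the arc together with `y` is a cycle of length `d + 2`. Minimality of `C` gives
`|C| ≤ |C| / 2 + 2`, that is `|C| ≤ 4`.
-/

open SimpleGraph

theorem Fin.val_sub_add_val_sub_of_ne {n : ℕ} {a b : Fin n} (h : a ≠ b) :
    (a - b).val + (b - a).val = n := by
  rcases lt_or_gt_of_ne h with hab | hab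
  · rw [Fin.coe_sub_iff_lt.2 hab, Fin.sub_val_of_le hab.le]; omega
  · rw [Fin.coe_sub_iff_lt.2 hab, Fin.sub_val_of_le hab.le]; omega

namespace SimpleGraph

variable {V : Type*} {G : SimpleGraph V} {m n : ℕ}

section Acyclic

variable [Fintype V] [DecidableRel G.Adj]

/-- The first vertex of a longest path is a leaf, or isolated. -/
lemma IsAcyclic.exists_degree_le_one [Nonempty V] (h : G.IsAcyclic) : ∃ v, G.degree v ≤ 1 := by
  obtain ⟨u, v, p, hp, hmax⟩ := Walk.exists_isPath_forall_isPath_length_le_length G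
  have hsnd : ∀ w, G.Adj u w → w = p.snd := by
    intro w hadj
    apply h.eq_snd_of_adj_start hp hadj
    by_contra hw
    have := hmax _ _ _ (hp.cons (h := hadj.symm) hw)
    simp at this
  refine ⟨u, ?_⟩
  calc G.degree u ≤ ({p.snd} : Finset V).card :=
        Finset.card_le_card fun w hw => by simpa using hsnd w ((mem_neighborFinset _ _ _).1 hw)
    _ = 1 := Finset.card_singleton _

lemma IsRegularOfDegree.not_isAcyclic [Nonempty V] {k : ℕ} (hreg : G.IsRegularOfDegree k)
    (hk : 2 ≤ k) : ¬ G.IsAcyclic := fun h => by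
  obtain ⟨v, hv⟩ := h.exists_degree_le_one
  rw [hreg v] at hv
  omega

end Acyclic

def Copy.pathGraphCastLE (h : m ≤ n) : Copy (pathGraph m) (pathGraph n) :=
  ⟨⟨Fin.castLE h, fun huv => by simpa [pathGraph_adj] using huv⟩, Fin.castLE_injective h⟩

def Copy.initialPath (f : Copy (cycleGraph n) G) (h : m ≤ n) : Copy (pathGraph m) G :=
  (f.comp (Copy.ofLE _ _ pathGraph_le_cycleGraph)).comp (Copy.pathGraphCastLE h)

lemma Copy.initialPath_last (f : Copy (cycleGraph n) G) (v : Fin n) :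
    f.initialPath (v.isLt : v.val + 1 ≤ n) (Fin.last v) = f v := rfl

def Copy.snoc (p : Copy (pathGraph (m + 1)) G) (y : V) (hy : y ∉ Set.range p)
    (h : G.Adj (p (Fin.last m)) y) : Copy (pathGraph (m + 2)) G := by
  refine ⟨⟨Fin.snoc (α := fun _ => V) p y, ?_⟩, Fin.snoc_injective_of_injective p.injective hy⟩
  suffices ∀ u v : Fin (m + 2), u.val + 1 = v.val →
      G.Adj (Fin.snoc (α := fun _ => V) p y u) (Fin.snoc (α := fun _ => V) p y v) by
    intro u v huv
    rcases pathGraph_adj.1 huv with huv | huv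
    exacts [this u v huv, (this v u huv).symm]
  intro u v huv
  induction v using Fin.lastCases with
  | last =>
    obtain rfl : u = (Fin.last m).castSucc := Fin.ext (by simp at huv ⊢; omega)
    simpa using h
  | cast v =>
    obtain ⟨u, rfl⟩ := (Fin.exists_castSucc_eq (i := u)).2 fun hu => by
      simp [hu] at huv; omega
    simpa using p.toHom.map_adj (pathGraph_adj.2 (Or.inl (by simpa using huv)))

@[simp] lemma Copy.coe_snoc (p : Copy (pathGraph (m + 1)) G) (y : V) (hy : y ∉ Set.range p)
    (h : G.Adj (p (Fin.last m)) y) : ⇑(p.snoc y hy h) = Fin.snoc (α := fun _ => V) p y := rfl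

lemma Copy.girth_le_of_adj_ends (p : Copy (pathGraph (m + 1)) G) (hm : 2 ≤ m)
    (h : G.Adj (p (Fin.last m)) (p 0)) : G.girth ≤ m + 1 := by
  have hcyc : Copy (cycleGraph (m + 1)) G := by
    refine ⟨⟨p, fun {u v} huv => ?_⟩, p.injective⟩
    wlog hle : v ≤ u generalizing u v
    · exact (this huv.symm (le_of_not_ge hle)).symm
    rcases cycleGraph_adj'.1 huv with huv | huv
    · exact p.toHom.map_adj
        (pathGraph_adj.2 (Or.inr (by rw [Fin.sub_val_of_le hle] at huv; omega)))
    · rcases hle.lt_or_eq with hlt | rfl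
      · have hvu := (Fin.coe_sub_iff_lt (a := v) (b := u)).2 hlt
        have hu := u.isLt
        obtain rfl : v = 0 := Fin.ext (by simp only [Fin.val_zero]; omega)
        obtain rfl : u = Fin.last m := Fin.ext (by simp only [Fin.val_last]; omega)
        exact h
      · simp at huv
  obtain ⟨a, w, hw, hlen⟩ := (cycleGraph_isContained_iff (by omega)).1 hcyc.isContained
  exact hlen ▸ girth_le_length hw

variable [NeZero n]

def Copy.rotate (f : Copy (cycleGraph n) G) (a : Fin n) : Copy (cycleGraph n) G :=
  f.comp ⟨⟨(· + a), fun huv => by simpa [cycleGraph_adj'] using huv⟩, add_left_injective a⟩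

@[simp] lemma Copy.rotate_apply (f : Copy (cycleGraph n) G) (a t : Fin n) :
    f.rotate a t = f (t + a) := rfl

lemma Copy.initialPath_zero (f : Copy (cycleGraph n) G) (h : m + 1 ≤ n) :
    f.initialPath h 0 = f 0 := rfl

lemma Copy.girth_lt_of_chord_at_zero (f : Copy (cycleGraph n) G) {v : Fin n} (hv : v ≠ 0)
    (hnadj : ¬(cycleGraph n).Adj 0 v) (h : G.Adj (f v) (f 0)) : G.girth < n := by
  have hv0 : v.val ≠ 0 := Fin.val_ne_iff.2 hv
  have hvn := v.isLt
  have hv1 : v.val ≠ 1 := fun h1 => hnadj (cycleGraph_adj'.2 (Or.inr (by simpa using h1)))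
  have hvn1 : v.val + 1 ≠ n := fun h1 => hnadj (cycleGraph_adj'.2 (Or.inl (by
    rw [(Fin.coe_sub_iff_lt (a := 0) (b := v)).2 (Fin.pos_iff_ne_zero.2 hv)]; simp; omega)))
  have := (f.initialPath (v.isLt : v.val + 1 ≤ n)).girth_le_of_adj_ends (by omega)
    (by rwa [f.initialPath_last, f.initialPath_zero])
  omega

lemma Copy.girth_le_of_common_neighbor_at_zero (f : Copy (cycleGraph n) G) {v : Fin n}
    (hv : v ≠ 0) {y : V} (hy : y ∉ Set.range f) (h0 : G.Adj (f 0) y) (hv' : G.Adj (f v) y) :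
    G.girth ≤ v.val + 2 := by
  have hv0 : v.val ≠ 0 := Fin.val_ne_iff.2 hv
  let p := f.initialPath (v.isLt : v.val + 1 ≤ n)
  have hyp : y ∉ Set.range p := fun ⟨t, ht⟩ => hy ⟨_, ht⟩
  have hvp : G.Adj (p (Fin.last v)) y := hv'
  refine (p.snoc y hyp hvp).girth_le_of_adj_ends (by omega) ?_
  rw [Copy.coe_snoc, Fin.snoc_last, ← Fin.castSucc_zero, Fin.snoc_castSucc]
  exact h0.symm

lemma Copy.adj_of_le_girth (f : Copy (cycleGraph n) G) (hn : n ≤ G.girth) {u v : Fin n}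
    (h : G.Adj (f u) (f v)) : (cycleGraph n).Adj u v := by
  by_contra hnadj
  have hne : v - u ≠ 0 := sub_ne_zero.2 fun huv => h.ne (congrArg f huv.symm)
  have := (f.rotate u).girth_lt_of_chord_at_zero hne
    (by simpa [cycleGraph_adj', neg_sub] using hnadj) (by simpa using h.symm)
  omega

lemma Copy.girth_le_of_common_neighbor (f : Copy (cycleGraph n) G) {i j : Fin n} (hij : i ≠ j)
    {y : V} (hy : y ∉ Set.range f) (hi : G.Adj (f i) y) (hj : G.Adj (f j) y) :
    G.girth ≤ n / 2 + 2 := by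
  wlog hle : (j - i).val ≤ n / 2 generalizing i j
  · exact this hij.symm hj hi (by have := Fin.val_sub_add_val_sub_of_ne hij; omega)
  have := (f.rotate i).girth_le_of_common_neighbor_at_zero (sub_ne_zero.2 hij.symm)
    (fun ⟨t, ht⟩ => hy ⟨_, ht⟩) (by simpa using hi) (by simpa using hj)
  omega

end SimpleGraph

theorem regular_graph_exists_good_induced_cycle_general
    {V : Type*} [Fintype V] [Nonempty V]
    (G : SimpleGraph V) [DecidableRel G.Adj] (k : ℕ) (hk : 2 ≤ k) (hreg : G.IsRegularOfDegree k) :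
    ∃ (n : ℕ), 3 ≤ n ∧ ∃ f : SimpleGraph.cycleGraph n ↪g G,
      ((∃ (i j : Fin n) (y : V), i ≠ j ∧ (∀ m : Fin n, f m ≠ y) ∧
        G.Adj (f i) y ∧ G.Adj (f j) y) → n ≤ 4) := by
  have hG := hreg.not_isAcyclic hk
  have h3 := three_le_girth hG
  have : NeZero G.girth := ⟨by omega⟩
  obtain ⟨a, w, hw, hlen⟩ := exists_girth_eq_length.2 hG
  obtain ⟨f⟩ := (cycleGraph_isContained_iff h3).2 ⟨a, w, hw, hlen.symm⟩
  refine ⟨G.girth, h3, ⟨f.toEmbedding, ⟨f.adj_of_le_girth le_rfl, f.toHom.map_adj⟩⟩, ?_⟩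
  rintro ⟨i, j, y, hij, hy, hi, hj⟩
  have := f.girth_le_of_common_neighbor hij (fun ⟨t, ht⟩ => hy t ht) hi hj
  omega

/-- Every finite `k`-regular simple graph with `k ≥ 2` contains an
induced cycle `C` such that if some two vertices of `C` have a common neighbor not
on `C`, then `C` has length at most 4.  (An induced cycle of length `n` is an
embedding of the cycle graph on `n` vertices.) -/
theorem regular_graph_exists_good_induced_cycle
    {V : Type*} [Fintype V] [DecidableEq V] [Nonempty V]
    (G : SimpleGraph V) [DecidableRel G.Adj] (k : ℕ) (hk : 2 ≤ k) (hreg : G.IsRegularOfDegree k) :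
    ∃ (n : ℕ), 3 ≤ n ∧ ∃ f : SimpleGraph.cycleGraph n ↪g G,
      ((∃ (i j : Fin n) (y : V), i ≠ j ∧ (∀ m : Fin n, f m ≠ y) ∧
        G.Adj (f i) y ∧ G.Adj (f j) y) → n ≤ 4) :=
  regular_graph_exists_good_induced_cycle_general G k hk hreg
end

section
/- The complete graph K_4 is edge-3-choosable: for every assignment L of a list of at least 3 colors to each of the 6 edges of K_4, there is a proper edge coloring of K_4 in which each edge receives a color from its own list (edges sharing an endpoint receive distinct colors). -/
/-!
Two distinct edges of `K₄` meet unless together they form one of its three perfect matchings, so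
the line graph of `K₄` is the octahedron `K_{2,2,2}`, and it suffices to show that `K_{2,…,2}` with
`m` parts is `m`-choosable (Erdős–Rubin–Taylor). If the lists of the two vertices of some part
share a colour, give both that colour, delete it from all other lists and induct on `m`.
Otherwise the two lists of every part are disjoint and Hall's condition holds: at most `m`
vertices see at least `m` colours, while more than `m` vertices contain a whole part, whose two
lists alone give `2m` colours.
-/

open Finset

theorem exists_injective_mem_of_disjoint {ι α : Type*} [Fintype ι] [DecidableEq α]
    (t : ι × Bool → Finset α) (ht : ∀ v, Fintype.card ι ≤ #(t v))
    (hdisj : ∀ i, Disjoint (t (i, false)) (t (i, true))) :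
    ∃ f : ι × Bool → α, Function.Injective f ∧ ∀ v, f v ∈ t v := by
  refine (all_card_le_biUnion_card_iff_existsInjective' t).mp fun s => ?_
  rcases le_or_gt #s (Fintype.card ι) with hs | hs
  · obtain rfl | ⟨v, hv⟩ := s.eq_empty_or_nonempty
    · simp
    calc #s ≤ Fintype.card ι := hs
      _ ≤ #(t v) := ht v
      _ ≤ #(s.biUnion t) := card_le_card (subset_biUnion_of_mem t hv)
  · obtain ⟨⟨i, b⟩, hv, ⟨j, b'⟩, hw, hne, rfl : i = j⟩ :=
      exists_ne_map_eq_of_card_lt_of_maps_to (t := univ) (f := Prod.fst) (by simpa using hs)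
        fun _ _ => mem_univ _
    have hb : b ≠ b' := fun h => hne (h ▸ rfl)
    have hd : Disjoint (t (i, b)) (t (i, b')) := by
      cases b <;> cases b' <;> simp_all [disjoint_comm]
    calc #s ≤ Fintype.card (ι × Bool) := card_le_univ s
      _ = Fintype.card ι + Fintype.card ι := by simp [mul_two]
      _ ≤ #(t (i, b)) + #(t (i, b')) := add_le_add (ht _) (ht _)
      _ = #(t (i, b) ∪ t (i, b')) := (card_union_of_disjoint hd).symm
      _ ≤ #(s.biUnion t) :=
        card_le_card (union_subset (subset_biUnion_of_mem t hv) (subset_biUnion_of_mem t hw))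

theorem exists_listColoring_of_erase {ι α : Type*} [DecidableEq ι] [DecidableEq α]
    (t : ι × Bool → Finset α) (p : ι) (x : α) (hx : ∀ b, x ∈ t (p, b))
    (c : {i // i ≠ p} × Bool → α) (hc : ∀ v, c v ∈ (t (v.1.1, v.2)).erase x)
    (hne : ∀ v w, v.1 ≠ w.1 → c v ≠ c w) :
    ∃ c : ι × Bool → α, (∀ v, c v ∈ t v) ∧ ∀ v w, v.1 ≠ w.1 → c v ≠ c w := by
  refine ⟨fun v => if h : v.1 = p then x else c (⟨v.1, h⟩, v.2), ?_, ?_⟩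
  · rintro ⟨i, b⟩
    dsimp only
    split_ifs with h
    · exact h ▸ hx b
    · exact mem_of_mem_erase (hc _)
  · rintro ⟨i, b⟩ ⟨j, b'⟩ (hij : i ≠ j)
    dsimp only
    split_ifs with hi hj hj
    · exact absurd (hi.trans hj.symm) hij
    · exact fun h => ne_of_mem_erase (hc _) h.symm
    · exact ne_of_mem_erase (hc _)
    · exact hne _ _ fun h => hij (congrArg Subtype.val h)

/-- `ι × Bool`, with `v` and `w` adjacent iff `v.1 ≠ w.1`, is the complete multipartite graph
with `Fintype.card ι` parts of size two. -/
theorem exists_listColoring_prod_bool {ι α : Type*} [Fintype ι] [DecidableEq α]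
    (t : ι × Bool → Finset α) (ht : ∀ v, Fintype.card ι ≤ #(t v)) :
    ∃ c : ι × Bool → α, (∀ v, c v ∈ t v) ∧ ∀ v w, v.1 ≠ w.1 → c v ≠ c w := by
  classical
  by_cases hdisj : ∀ i, Disjoint (t (i, false)) (t (i, true))
  · obtain ⟨f, hf, hft⟩ := exists_injective_mem_of_disjoint t ht hdisj
    exact ⟨f, hft, fun v w h => hf.ne fun e => h (congrArg Prod.fst e)⟩
  obtain ⟨p, hp⟩ := not_forall.mp hdisj
  obtain ⟨x, hx₀, hx₁⟩ := not_disjoint_iff.mp hp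
  have hx : ∀ b, x ∈ t (p, b) := by rintro (_ | _) <;> assumption
  obtain ⟨c, hc, hne⟩ := exists_listColoring_prod_bool (ι := {i // i ≠ p})
    (fun v => (t (v.1.1, v.2)).erase x) fun v => by
      have := pred_card_le_card_erase (s := t (v.1.1, v.2)) (a := x)
      have := ht (v.1.1, v.2)
      simp only [ne_eq, Fintype.card_subtype_compl, Fintype.card_unique]
      omega
  exact exists_listColoring_of_erase t p x hx c hc hne
termination_by Fintype.card ι
decreasing_by classical exact Fintype.card_subtype_lt (x := p) (not_not_intro rfl)

/-- The edges `(i, false)` and `(i, true)` form the perfect matching of `K₄` through `0(i+1)`. -/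
def k4Edge : Fin 3 × Bool → Sym2 (Fin 4)
  | (i, false) => s(0, i.succ)
  | (i, true) => s((i + 1).succ, (i + 2).succ)

theorem k4Edge_mem_edgeSet (v : Fin 3 × Bool) :
    k4Edge v ∈ (SimpleGraph.completeGraph (Fin 4)).edgeSet := by
  revert v; decide

theorem exists_k4Edge_eq {e : Sym2 (Fin 4)}
    (he : e ∈ (SimpleGraph.completeGraph (Fin 4)).edgeSet) : ∃ v, k4Edge v = e := by
  revert e; decide

theorem k4Edge_fst_ne {v w : Fin 3 × Bool} (hne : k4Edge v ≠ k4Edge w) {x : Fin 4}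
    (hv : x ∈ k4Edge v) (hw : x ∈ k4Edge w) : v.1 ≠ w.1 := by
  revert v w x; decide

/-- The complete graph `K_4` is edge-3-choosable: from any lists
of at least 3 colors on its edges one can properly color the edges from their
lists. -/
theorem K4_edge_three_choosable
    (L : Sym2 (Fin 4) → Finset ℕ)
    (hL : ∀ e ∈ (SimpleGraph.completeGraph (Fin 4)).edgeSet, 3 ≤ (L e).card) :
    ∃ ce : Sym2 (Fin 4) → ℕ,
      (∀ e ∈ (SimpleGraph.completeGraph (Fin 4)).edgeSet, ce e ∈ L e) ∧
      (∀ e ∈ (SimpleGraph.completeGraph (Fin 4)).edgeSet, ∀ f ∈ (SimpleGraph.completeGraph (Fin 4)).edgeSet,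
        e ≠ f → (∃ x : Fin 4, x ∈ e ∧ x ∈ f) → ce e ≠ ce f) := by
  obtain ⟨c, hcL, hc⟩ := exists_listColoring_prod_bool (fun v => L (k4Edge v))
    fun v => by simpa using hL _ (k4Edge_mem_edgeSet v)
  have hinv : ∀ e ∈ (SimpleGraph.completeGraph (Fin 4)).edgeSet,
      k4Edge (Function.invFun k4Edge e) = e :=
    fun e he => Function.invFun_eq (exists_k4Edge_eq he)
  refine ⟨fun e => c (Function.invFun k4Edge e), fun e he => ?_, ?_⟩
  · simpa only [hinv e he] using hcL (Function.invFun k4Edge e)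
  · rintro e he f hf hne ⟨x, hxe, hxf⟩
    exact hc _ _ (k4Edge_fst_ne (by rwa [hinv e he, hinv f hf]) (by rwa [hinv e he])
      (by rwa [hinv f hf]))
end

section
/- Let G be a finite simple graph, let v be a vertex of G, and let D be a shortest cycle through v (a cycle containing v of minimum length among all cycles of G containing v). If w and x are two vertices on D that have a common neighbor y not on D, then either w and x are adjacent in G, or w and x have a common neighbor z lying on D. -/
/-!
Rotate `D` to start at `w` and cut it at `x` into two `w`–`x` paths `p` and `q`; the vertex `v`
lies on one of them, say `p`. Closing `p` up through `y` gives a cycle through `v` of length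
`p.length + 2`, so minimality of `D` forces `q.length ≤ 2`, and a path of length at most two
between distinct vertices is an edge or has a common neighbour of its ends as middle vertex.
-/

namespace SimpleGraph.Walk

variable {V : Type*} {G : SimpleGraph V}

lemma adj_or_exists_common_adj_of_length_le_two {a b : V} (p : G.Walk a b) (hab : a ≠ b)
    (hp : p.length ≤ 2) : G.Adj a b ∨ ∃ z ∈ p.support, G.Adj a z ∧ G.Adj b z := by
  match p with
  | .nil => exact absurd rfl hab
  | .cons h .nil => exact Or.inl h
  | .cons h (.cons h' .nil) => exact Or.inr ⟨_, by simp, h, h'.symm⟩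
  | .cons _ (.cons _ (.cons _ _)) => simp [length_cons] at hp

lemma IsPath.isCycle_cons_cons {a b y : V} {p : G.Walk a b} (hp : p.IsPath) (hab : a ≠ b)
    (hy : y ∉ p.support) (hay : G.Adj a y) (hby : G.Adj b y) :
    (cons hby (cons hay.symm p)).IsCycle := by
  rw [cons_isCycle_iff, cons_isPath_iff, edges_cons, List.mem_cons, Sym2.eq_iff]
  refine ⟨⟨hp, hy⟩, ?_⟩
  rintro ((⟨rfl, -⟩ | ⟨rfl, -⟩) | he)
  · exact hby.ne rfl
  · exact hab rfl
  · exact hy (p.snd_mem_support_of_mem_edges he)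

variable [DecidableEq V]

lemma IsCycle.isPath_dropUntil {u x : V} {c : G.Walk u u} (hc : c.IsCycle) (h : x ∈ c.support)
    (hxu : x ≠ u) : (c.dropUntil x h).IsPath :=
  (c.take_spec h ▸ hc).isPath_of_append_right (not_nil_of_ne hxu.symm)

lemma length_le_length_add_two_of_isCycle_min {v a b y : V} (D : G.Walk v v)
    (hmin : ∀ D' : G.Walk v v, D'.IsCycle → D.length ≤ D'.length) {p : G.Walk a b}
    (hp : p.IsPath) (hab : a ≠ b) (hy : y ∉ p.support) (hay : G.Adj a y) (hby : G.Adj b y)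
    (hv : v ∈ p.support) : D.length ≤ p.length + 2 := by
  have hvC : v ∈ (cons hby (cons hay.symm p)).support := by simp [hv]
  simpa using hmin _ ((hp.isCycle_cons_cons hab hy hay hby).rotate hvC)

end SimpleGraph.Walk

/-- Let `D` be a shortest cycle through a vertex `v` of a simple
graph `G`.  If `w` and `x` are two vertices on `D` having a common neighbor `y` not
on `D`, then either `w` and `x` are adjacent, or `w` and `x` have a common
neighbor `z` on `D`. -/
theorem shortest_cycle_common_neighbor
    {V : Type*} (G : SimpleGraph V) (v : V)
    (D : G.Walk v v) (hD : D.IsCycle)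
    (hmin : ∀ D' : G.Walk v v, D'.IsCycle → D.length ≤ D'.length)
    (w x y : V) (hwx : w ≠ x)
    (hw : w ∈ D.support) (hx : x ∈ D.support) (hy : y ∉ D.support)
    (hwy : G.Adj w y) (hxy : G.Adj x y) :
    G.Adj w x ∨ ∃ z ∈ D.support, G.Adj w z ∧ G.Adj x z := by
  classical
  set E := D.rotate w hw
  have hxE : x ∈ E.support := by simpa [E] using hx
  set p := E.takeUntil x hxE
  set q := E.dropUntil x hxE
  have hp : p.IsPath := (hD.rotate hw).isPath_takeUntil hxE
  have hq : q.IsPath := (hD.rotate hw).isPath_dropUntil hxE hwx.symm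
  have hlen : p.length + q.length = D.length := by
    rw [← p.length_append q, E.take_spec hxE, D.length_rotate]
  have hpD : p.support ⊆ D.support := fun z hz => by
    simpa [E] using E.support_takeUntil_subset_support hxE hz
  have hqD : q.support ⊆ D.support := fun z hz => by
    simpa [E] using E.support_dropUntil_subset_support hxE hz
  have hvE : v ∈ p.support ∨ v ∈ q.support := by
    rw [← p.mem_support_append_iff q, E.take_spec hxE, D.mem_support_rotate_iff]
    exact D.start_mem_support
  rcases hvE with hv | hv
  · have hD_le := D.length_le_length_add_two_of_isCycle_min hmin hp hwx
      (fun h => hy (hpD h)) hwy hxy hv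
    rcases q.adj_or_exists_common_adj_of_length_le_two hwx.symm (by omega) with
      h | ⟨z, hz, hxz, hwz⟩
    · exact Or.inl h.symm
    · exact Or.inr ⟨z, hqD hz, hwz, hxz⟩
  · have hD_le := D.length_le_length_add_two_of_isCycle_min hmin hq hwx.symm
      (fun h => hy (hqD h)) hxy hwy hv
    rcases p.adj_or_exists_common_adj_of_length_le_two hwx (by omega) with
      h | ⟨z, hz, hwz, hxz⟩
    · exact Or.inl h
    · exact Or.inr ⟨z, hpD hz, hwz, hxz⟩
end
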